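/- Let p ≥ 2, n ≥ k ≥ 2, and d ≥ 1 be integers, and let a_1 ≤ a_2 ≤ … ≤ a_p be positive integers. Suppose there exists a K_{a_1,a_2}-free graph Γ_0 on n + d − 1 vertices such that at most k − 1 vertices of Γ_0 have degree less than d. Then r(K_p(a_1,…,a_p), B_{k,n}) > (p−1)(n−1) + d; equivalently, there exists a graph on (p−1)(n−1) + d vertices that is K_p(a_1,…,a_p)-free and whose complement contains no copy of B_{k,n}. -/

import Mathlib

/-!
Take the join of `Γ₀` with the complete `(p-2)`-partite graph whose classes have size `n-1`.
A copy of `K_p(a₁,…,a_p)` meets each class in at most one of its parts, since vertices of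
distinct parts are adjacent; so two parts lie in `Γ₀`, which by monotonicity of `a` then
contains `K_{a₁,a₂}`.
In the complement the classes become disjoint cliques of size `n-1`, with no edges to `Γ₀ᶜ`.
A spine vertex of a book is adjacent to all other vertices, so the book lies in one piece,
hence in `Γ₀ᶜ`; there each of its `k` spine vertices is non-adjacent in `Γ₀` to the other `n-1`
vertices of the book, so has `Γ₀`-degree at most `(n+d-1) - n = d-1`.

Since `sInf ∅ = 0`, the bound also needs the Ramsey number to be finite; the Erdős–Szekeres
bound `r(A, B) ≤ 2^(|A| + |B|)` provides that.
-/

open SimpleGraph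

/-- `ContainsCopy G Γ` : `Γ` contains a (not necessarily induced) copy of `G`. -/
def ContainsCopy {α β : Type*} (G : SimpleGraph α) (Γ : SimpleGraph β) : Prop :=
  ∃ f : α → β, Function.Injective f ∧ ∀ ⦃a b⦄, G.Adj a b → Γ.Adj (f a) (f b)

/-- The book graph `B_{k,n}`: `n` vertices, the first `k` of which form the spine. -/
def Book (k n : ℕ) : SimpleGraph (Fin n) :=
  SimpleGraph.fromRel (fun a b => (a : ℕ) < k ∨ (b : ℕ) < k)

/-- The Ramsey number `r(G,H)`: the least `N` such that every graph `Γ` on `N` vertices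
contains a copy of `G`, or its complement contains a copy of `H`. -/
noncomputable def ramseyNumber {α β : Type*} (G : SimpleGraph α) (H : SimpleGraph β) : ℕ :=
  sInf {N | ∀ Γ : SimpleGraph (Fin N), ContainsCopy G Γ ∨ ContainsCopy H Γᶜ}

/-- The degree of a vertex. -/
noncomputable def degCount {V : Type*} (Γ : SimpleGraph V) (v : V) : ℕ :=
  (Γ.neighborSet v).ncard

/-- The number of copies of `K_p` in `Γ`, i.e. sets of `p` pairwise adjacent vertices. -/
noncomputable def cliqueCount {V : Type*} (Γ : SimpleGraph V) (p : ℕ) : ℕ :=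
  {s : Finset V | Γ.IsNClique p s}.ncard

/-- `Γ` contains an induced copy of the complete multipartite graph with all parts
of size `t`, with parts `P 0, …, P (r-1)`. -/
def IsCompleteMultipartiteIn {V : Type*} (Γ : SimpleGraph V) {r : ℕ} (t : ℕ)
    (P : Fin r → Finset V) : Prop :=
  (∀ i, (P i).card = t) ∧
  (∀ i j, i ≠ j → Disjoint (P i) (P j)) ∧
  (∀ i, ∀ a ∈ P i, ∀ b ∈ P i, ¬ Γ.Adj a b) ∧
  (∀ i j, i ≠ j → ∀ a ∈ P i, ∀ b ∈ P j, Γ.Adj a b)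

/-- The number of edges of `Γ` with both endpoints inside `s`. -/
noncomputable def edgesInside {V : Type*} (Γ : SimpleGraph V) (s : Finset V) : ℕ :=
  {e ∈ Γ.edgeSet | ∀ v ∈ e, v ∈ s}.ncard

open Finset Fintype

theorem containsCopy_iff_isContained {α β : Type*} {G : SimpleGraph α} {Γ : SimpleGraph β} :
    ContainsCopy G Γ ↔ G ⊑ Γ :=
  ⟨fun ⟨f, hf, hadj⟩ => ⟨⟨⟨f, fun h => hadj h⟩, hf⟩⟩,
    fun ⟨f⟩ => ⟨f, f.injective, fun _ _ h => f.toHom.map_adj h⟩⟩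

theorem Book.adj_of_lt {k n : ℕ} {c x : Fin n} (hc : (c : ℕ) < k) (hcx : c ≠ x) :
    (Book k n).Adj c x :=
  (fromRel_adj _ _ _).2 ⟨hcx, Or.inl (Or.inl hc)⟩

namespace SimpleGraph

variable {α β V W : Type*}

theorem card_lt_two_pow_of_cliqueFreeOn (G : SimpleGraph V) {m n : ℕ} {s : Finset V}
    (hG : G.CliqueFreeOn s m) (hGc : Gᶜ.CliqueFreeOn s n) : #s < 2 ^ (m + n) := by
  classical
  induction m generalizing n s with
  | zero => exact (hG (by simp) (isNClique_empty.mpr rfl)).elim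
  | succ m ihm =>
    induction n generalizing s with
    | zero => exact (hGc (by simp) (isNClique_empty.mpr rfl)).elim
    | succ n ihn =>
      obtain rfl | ⟨v, hv⟩ := s.eq_empty_or_nonempty
      · simp
      set N := (s.erase v).filter (G.Adj v)
      set M := (s.erase v).filter (fun w => ¬ G.Adj v w)
      have hN : #N < 2 ^ (m + (n + 1)) :=
        ihm (CliqueFreeOn.subset G (fun w hw => by simp_all [N]) (CliqueFreeOn.of_succ G hG hv))
          (CliqueFreeOn.subset Gᶜ (fun w hw => by simp_all [N]) hGc)
      have hM : #M < 2 ^ (m + 1 + n) :=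
        ihn (CliqueFreeOn.subset G (fun w hw => by simp_all [M]) hG)
          (CliqueFreeOn.subset Gᶜ (fun w hw => by simp_all [M, compl_adj, ne_comm])
            (CliqueFreeOn.of_succ Gᶜ hGc hv))
      have hcard : #N + #M + 1 = #s := by
        rw [card_filter_add_card_filter_not, card_erase_add_one hv]
      have hpow : 2 ^ (m + 1 + (n + 1)) = 2 ^ (m + (n + 1)) + 2 ^ (m + 1 + n) := by ring
      omega

theorem isContained_or_isContained_compl_of_two_pow_le [Fintype α] [Fintype β] [Fintype V]
    (A : SimpleGraph α) (B : SimpleGraph β) (G : SimpleGraph V)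
    (h : 2 ^ (card α + card β) ≤ card V) : A ⊑ G ∨ B ⊑ Gᶜ := by
  by_contra hAB
  rw [not_or] at hAB
  have hA : G.CliqueFreeOn (univ : Finset V) (card α) := by
    rw [coe_univ, cliqueFreeOn_univ, cliqueFree_iff_top_free]
    exact fun hG => hAB.1 (hG.mono_left le_top)
  have hB : Gᶜ.CliqueFreeOn (univ : Finset V) (card β) := by
    rw [coe_univ, cliqueFreeOn_univ, cliqueFree_iff_top_free]
    exact fun hG => hAB.2 (hG.mono_left le_top)
  have := card_lt_two_pow_of_cliqueFreeOn G hA hB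
  rw [card_univ] at this
  omega

theorem card_lt_ramseyNumber [Fintype α] [Fintype β] [Fintype V] {A : SimpleGraph α}
    {B : SimpleGraph β} (G : SimpleGraph V) (hA : A.Free G) (hB : B.Free Gᶜ) :
    card V < ramseyNumber A B := by
  have hne : {N | ∀ Γ : SimpleGraph (Fin N), ContainsCopy A Γ ∨ ContainsCopy B Γᶜ}.Nonempty :=
    ⟨2 ^ (card α + card β), fun Γ => by
      simpa only [containsCopy_iff_isContained] using
        isContained_or_isContained_compl_of_two_pow_le A B Γ (by simp)⟩
  by_contra! hle
  obtain ⟨ι⟩ := Function.Embedding.nonempty_of_card_le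
    (by simpa using hle : card (Fin (ramseyNumber A B)) ≤ card V)
  rcases Nat.sInf_mem hne (G.comap ι) with h | h
  · exact hA ((containsCopy_iff_isContained.1 h).trans (Embedding.comap ι G).isContained)
  · exact hB ((containsCopy_iff_isContained.1 h).trans
      (Embedding.complEquiv (Embedding.comap ι G)).isContained)

theorem isContained_comap_of_forall_mem_range {A : SimpleGraph α} {G : SimpleGraph W}
    (f : Copy A G) {g : V → W} (hf : ∀ x, f x ∈ Set.range g) :
    A ⊑ G.comap g := by
  choose φ hφ using hf
  exact ⟨⟨⟨φ, fun hxy => by simpa [hφ] using f.toHom.map_adj hxy⟩,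
    fun x y e => f.injective (by simp only [Copy.coe_toHom, ← hφ]; exact congrArg g e)⟩⟩

theorem comap_inl_sum (G : SimpleGraph V) (H : SimpleGraph W) : (G ⊕g H).comap Sum.inl = G := by
  ext; simp

theorem comap_inr_sum (G : SimpleGraph V) (H : SimpleGraph W) : (G ⊕g H).comap Sum.inr = H := by
  ext; simp

theorem isContained_or_isContained_of_isContained_sum {A : SimpleGraph α} {G : SimpleGraph V}
    {H : SimpleGraph W} {v : α} (hv : ∀ x, x ≠ v → A.Adj v x) (h : A ⊑ G ⊕g H) :
    A ⊑ G ∨ A ⊑ H := by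
  obtain ⟨f⟩ := h
  have hside : ∀ x, (f x).isLeft = (f v).isLeft := by
    intro x
    obtain rfl | hx := eq_or_ne x v
    · rfl
    have hadj := f.toHom.map_adj (hv x hx)
    simp only [Copy.coe_toHom] at hadj
    cases hfv : f v <;> cases hfx : f x <;> simp_all
  cases hfv : (f v).isLeft
  · right
    rw [← comap_inr_sum G H]
    exact isContained_comap_of_forall_mem_range f fun x =>
      (Sum.isRight_iff.1 (by simpa [hfv] using hside x)).imp fun _ => Eq.symm
  · left
    rw [← comap_inl_sum G H]
    exact isContained_comap_of_forall_mem_range f fun x =>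
      (Sum.isLeft_iff.1 (by simpa [hfv] using hside x)).imp fun _ => Eq.symm

def join (G : SimpleGraph V) (H : SimpleGraph W) : SimpleGraph (V ⊕ W) := (Gᶜ ⊕g Hᶜ)ᶜ

section join

variable {G : SimpleGraph V} {H : SimpleGraph W}

@[simp] theorem join_adj_inl {v v' : V} : (join G H).Adj (.inl v) (.inl v') ↔ G.Adj v v' := by
  by_cases h : v = v' <;> simp [join, h]

@[simp] theorem join_adj_inr {w w' : W} : (join G H).Adj (.inr w) (.inr w') ↔ H.Adj w w' := by
  by_cases h : w = w' <;> simp [join, h]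

theorem comap_inr_join (G : SimpleGraph V) (H : SimpleGraph W) : (join G H).comap Sum.inr = H := by
  ext; simp

theorem compl_join : (join G H)ᶜ = Gᶜ ⊕g Hᶜ := compl_compl _

end join

theorem exists_two_parts_mem_range_inr {ι : Type*} [Fintype ι] {V : ι → Type*} {r t : ℕ}
    {H : SimpleGraph W}
    (f : Copy (completeMultipartiteGraph V) (join (completeEquipartiteGraph r t) H))
    (hr : r + 2 ≤ card ι) :
    ∃ i j, i ≠ j ∧ (∀ x, f ⟨i, x⟩ ∈ Set.range Sum.inr) ∧ (∀ y, f ⟨j, y⟩ ∈ Set.range Sum.inr) := by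
  classical
  set T := univ.filter fun i => ∃ x, f ⟨i, x⟩ ∉ Set.range Sum.inr
  have hT : #T ≤ r := by
    have hleft : ∀ i : T, ∃ x c, f ⟨i, x⟩ = .inl c := by
      rintro ⟨i, hi⟩
      obtain ⟨x, hx⟩ := (mem_filter.1 hi).2
      cases hfx : f ⟨i, x⟩ with
      | inl c => exact ⟨x, c, hfx⟩
      | inr w => exact (hx ⟨w, hfx.symm⟩).elim
    choose x c hc using hleft
    have hinj : Function.Injective fun i => (c i).1 := by
      intro i i' hcls
      by_contra hne
      have := f.toHom.map_adj (show (completeMultipartiteGraph V).Adj ⟨i, x i⟩ ⟨i', x i'⟩ from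
        fun e => hne (Subtype.ext e))
      simp only [Copy.coe_toHom, hc, join_adj_inl, completeEquipartiteGraph_adj] at this
      exact this hcls
    simpa using card_le_of_injective _ hinj
  obtain ⟨i, hi, j, hj, hij⟩ := one_lt_card.1 (show 1 < #Tᶜ by rw [card_compl]; omega)
  simp only [T, mem_compl, mem_filter, mem_univ, true_and, not_exists, not_not] at hi hj
  exact ⟨i, j, hij, hi, hj⟩

theorem completeBipartiteGraph_isContained_of_forall_mem_range_inr {ι : Type*} {V : ι → Type*}
    {G : SimpleGraph W} {H : SimpleGraph β} (f : Copy (completeMultipartiteGraph V) (join G H))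
    {i j : ι} (hij : i ≠ j) (hi : ∀ x, f ⟨i, x⟩ ∈ Set.range Sum.inr)
    (hj : ∀ y, f ⟨j, y⟩ ∈ Set.range Sum.inr) :
    completeBipartiteGraph (V i) (V j) ⊑ H := by
  let g : Copy (completeBipartiteGraph (V i) (V j)) (completeMultipartiteGraph V) :=
    ⟨⟨Sum.elim (Sigma.mk i) (Sigma.mk j), by rintro (x | x) (y | y) h <;> simp_all [hij.symm]⟩,
      by have := hij.symm; rintro (x | x) (y | y) h <;> simp_all⟩
  rw [← comap_inr_join G H]
  exact isContained_comap_of_forall_mem_range (f.comp g) (by rintro (x | y); exacts [hi x, hj y])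

theorem completeBipartiteGraph_isContained_of_embedding {γ δ : Type*} (e₁ : α ↪ γ) (e₂ : β ↪ δ) :
    completeBipartiteGraph α β ⊑ completeBipartiteGraph γ δ :=
  ⟨⟨⟨Sum.map e₁ e₂, by rintro (x | x) (y | y) h <;> simp_all⟩, e₁.injective.sumMap e₂.injective⟩⟩

theorem completeMultipartiteGraph_free_join {p : ℕ} {a : Fin p → ℕ} (hmono : Monotone a)
    {r t : ℕ} {H : SimpleGraph W} (hrp : r + 2 ≤ p)
    (hH : (completeBipartiteGraph (Fin (a ⟨0, by omega⟩)) (Fin (a ⟨1, by omega⟩))).Free H) :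
    (completeMultipartiteGraph fun i => Fin (a i)).Free
      (join (completeEquipartiteGraph r t) H) := by
  rintro ⟨f⟩
  obtain ⟨i, j, hij, hi, hj⟩ := exists_two_parts_mem_range_inr f (by simpa using hrp)
  wlog hlt : i < j generalizing i j
  · exact this j i hij.symm hj hi (hij.lt_or_gt.resolve_left hlt)
  have h0 : a ⟨0, by omega⟩ ≤ a i := hmono (Fin.mk_le_of_le_val (Nat.zero_le _))
  have h1 : a ⟨1, by omega⟩ ≤ a j := hmono (Fin.mk_le_of_le_val (by omega))
  exact hH ((completeBipartiteGraph_isContained_of_embedding (Fin.castLEEmb h0)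
    (Fin.castLEEmb h1)).trans
      (completeBipartiteGraph_isContained_of_forall_mem_range_inr f hij hi hj))

theorem card_le_of_isContained_compl_completeEquipartiteGraph [Fintype α] {A : SimpleGraph α}
    {r t : ℕ} {v : α} (hv : ∀ x, x ≠ v → A.Adj v x) (h : A ⊑ (completeEquipartiteGraph r t)ᶜ) :
    card α ≤ t := by
  obtain ⟨f⟩ := h
  have hcls : ∀ x, (f x).1 = (f v).1 := by
    intro x
    obtain rfl | hx := eq_or_ne x v
    · rfl
    have hadj := f.toHom.map_adj (hv x hx)
    simp only [Copy.coe_toHom, compl_adj, completeEquipartiteGraph_adj, not_not] at hadj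
    exact hadj.2.symm
  simpa using card_le_of_injective (fun x => (f x).2)
    fun x y e => f.injective (Prod.ext ((hcls x).trans (hcls y).symm) e)

theorem le_ncard_setOf_degCount_le_of_book_isContained_compl [Fintype W] {G : SimpleGraph W}
    {k n : ℕ} (hkn : k ≤ n) (h : Book k n ⊑ Gᶜ) :
    k ≤ {w | degCount G w ≤ card W - n}.ncard := by
  obtain ⟨f⟩ := h
  have hdeg : ∀ c : Fin n, (c : ℕ) < k → degCount G (f c) ≤ card W - n := by
    intro c hc
    have hsub : G.neighborSet (f c) ⊆ (Set.range f)ᶜ := by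
      rintro w hw ⟨x, rfl⟩
      obtain rfl | hcx := eq_or_ne c x
      · exact G.loopless.irrefl _ hw
      · exact ((compl_adj _ _ _).1 (f.toHom.map_adj (Book.adj_of_lt hc hcx))).2 hw
    have hrange : (Set.range f).ncard = n := by
      rw [Set.ncard_range_of_injective (f := f) f.injective, Nat.card_fin]
    calc degCount G (f c) ≤ (Set.range f)ᶜ.ncard := Set.ncard_le_ncard hsub
      _ = card W - n := by rw [Set.ncard_compl, hrange, Nat.card_eq_fintype_card]
  calc k = (Set.univ : Set (Fin k)).ncard := by simp
    _ ≤ _ := Set.ncard_le_ncard_of_injOn (fun c => f (Fin.castLE hkn c))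
      (fun c _ => hdeg _ (by simp))
      (f.injective.comp (Fin.castLE_injective hkn)).injOn

theorem book_free_compl_join [Fintype W] {k n d r t : ℕ} (hk : 1 ≤ k) (hkn : k ≤ n) (ht : t < n)
    {G : SimpleGraph W} (hW : card W - n < d) (hlow : {w | degCount G w < d}.ncard ≤ k - 1) :
    (Book k n).Free (join (completeEquipartiteGraph r t) G)ᶜ := by
  intro h
  rw [compl_join] at h
  have hv : ∀ x, x ≠ ⟨0, by omega⟩ → (Book k n).Adj ⟨0, by omega⟩ x :=
    fun x hx => Book.adj_of_lt (show 0 < k by omega) hx.symm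
  rcases isContained_or_isContained_of_isContained_sum hv h with hleft | hright
  · have := card_le_of_isContained_compl_completeEquipartiteGraph hv hleft
    simp only [Fintype.card_fin] at this
    omega
  · have hspine := le_ncard_setOf_degCount_le_of_book_isContained_compl hkn hright
    have : {w | degCount G w ≤ card W - n}.ncard ≤ {w | degCount G w < d}.ncard :=
      Set.ncard_le_ncard fun w (hw : degCount G w ≤ card W - n) => show degCount G w < d by omega
    omega

end SimpleGraph

theorem dirac_type_lower_bound (p k n d : ℕ) (hp : 2 ≤ p) (hk : 2 ≤ k) (hkn : k ≤ n)
    (hd : 1 ≤ d)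
    (a : Fin p → ℕ) (hmono : Monotone a)
    (Γ₀ : SimpleGraph (Fin (n + d - 1)))
    (hfree : ¬ ContainsCopy
      (completeBipartiteGraph (Fin (a ⟨0, by omega⟩)) (Fin (a ⟨1, by omega⟩))) Γ₀)
    (hlow : {v : Fin (n + d - 1) | degCount Γ₀ v < d}.ncard ≤ k - 1) :
    (p - 1) * (n - 1) + d
      < ramseyNumber (completeMultipartiteGraph (fun i : Fin p => Fin (a i))) (Book k n) := by
  have hcard : card ((Fin (p - 2) × Fin (n - 1)) ⊕ Fin (n + d - 1)) = (p - 1) * (n - 1) + d := by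
    obtain ⟨q, rfl⟩ : ∃ q, p = q + 2 := ⟨p - 2, by omega⟩
    rw [card_sum, card_prod, Fintype.card_fin, Fintype.card_fin, Fintype.card_fin,
      show q + 2 - 2 = q by omega, show q + 2 - 1 = q + 1 by omega, Nat.succ_mul]
    omega
  rw [← hcard]
  exact card_lt_ramseyNumber (join (completeEquipartiteGraph (p - 2) (n - 1)) Γ₀)
    (completeMultipartiteGraph_free_join hmono (by omega)
      (by rwa [containsCopy_iff_isContained] at hfree))
    (book_free_compl_join (by omega) hkn (by omega) (by simp only [Fintype.card_fin]; omega) hlow)
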